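/- Let X be a finite linearly ordered set, Y' a finite linearly ordered set with maximal element y₀, and ↝ a traversable relation between Y' and X such that for all x ∈ X and y ∈ Y' with y ≠ y₀, if y ↝ x then y₀ ↝ x. Set Y = Y' \ {y₀}. Let f be the best ↝-matching between X and Y with complement C of its range in Y of size a, and let f' be the best ↝-matching between X and Y' with complement C' of its range in Y' of size a'. Then a ≤ a' ≤ a + 1; moreover a' = a + 1 if and only if the domain of f equals {x ∈ X : y₀ ↝ x}, and in that case C' = C ∪ {y₀} and f' coincides with f. -/

import Mathlib

/-- The relation `r` (read `r y x` as `y ↝ x`) is traversable: for `x₂ ≤ x₁` and `y₂ ≤ y₁`,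
if `y₁ ↝ x₁`, `y₂ ↝ x₁` and `y₂ ↝ x₂` then `y₁ ↝ x₂`. -/
def TraversableRel {X Y : Type*} [Preorder X] [Preorder Y] (r : Y → X → Prop) : Prop :=
  ∀ x₁ x₂ : X, ∀ y₁ y₂ : Y, x₂ ≤ x₁ → y₂ ≤ y₁ → r y₁ x₁ → r y₂ x₁ → r y₂ x₂ → r y₁ x₂

/-- `g` is a `↝`-matching: an injective partial function from `X` to `Y` (encoded as
`g : X → Option Y`) with `g x ↝ x` whenever defined. -/
def IsMatchingFn {X Y : Type*} (r : Y → X → Prop) (g : X → Option Y) : Prop :=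
  (∀ x y, g x = some y → r y x) ∧ ∀ x₁ x₂ y, g x₁ = some y → g x₂ = some y → x₁ = x₂

/-- Greedy matching: process the given list of elements of `X` in order, assigning to each
the least still-available `y` with `y ↝ x`, if any. -/
def bestGo {X Y : Type*} [DecidableEq X] [LinearOrder Y] [DecidableEq Y]
    (r : Y → X → Prop) [∀ y x, Decidable (r y x)] :
    List X → Finset Y → X → Option Y
  | [], _, _ => none
  | x :: xs, avail, x' =>
    if h : (avail.filter (fun y => r y x)).Nonempty then
      if x' = x then some ((avail.filter (fun y => r y x)).min' h)
      else bestGo r xs (avail.erase ((avail.filter (fun y => r y x)).min' h)) x'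
    else
      if x' = x then none else bestGo r xs avail x'

/-- The best (greedy) `↝`-matching between `A ⊆ X` and `B ⊆ Y`: go through the elements of
`A` from the largest down, assigning to each the minimal unused `y ∈ B` with `y ↝ x`
when one exists. -/
def bestMatchOn {X Y : Type*} [LinearOrder X] [LinearOrder Y] [Fintype X]
    (r : Y → X → Prop) [∀ y x, Decidable (r y x)] (A : Finset X) (B : Finset Y) :
    X → Option Y :=
  bestGo r ((A.sort (· ≤ ·)).reverse) B

/-- The domain of a partial function `X → Option Y`. -/
def matchDom {X Y : Type*} [Fintype X] (f : X → Option Y) : Finset X :=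
  Finset.univ.filter (fun x => (f x).isSome)

lemma bestGo_mem {X Y : Type*} [DecidableEq X] [LinearOrder Y]
    (r : Y → X → Prop) [∀ y x, Decidable (r y x)] :
    ∀ (L : List X) (S : Finset Y) (x : X) (y : Y), bestGo r L S x = some y → y ∈ S ∧ r y x
  | [], S, x, y => by simp [bestGo]
  | a :: L, S, x, y => by
    rw [bestGo]
    split_ifs with h hx hx
    · intro hy
      have hm := Finset.min'_mem _ h
      rw [Option.some_inj] at hy
      subst hy; subst hx
      simpa using Finset.mem_filter.mp hm
    · intro hy
      have := bestGo_mem r L _ x y hy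
      exact ⟨Finset.mem_of_mem_erase this.1, this.2⟩
    · simp
    · exact fun hy => bestGo_mem r L S x y hy

lemma bestGo_insert_top {X Y : Type*} [DecidableEq X] [LinearOrder Y]
    (r : Y → X → Prop) [∀ y x, Decidable (r y x)]
    (y₀ : Y) (hy₀ : ∀ y, y ≤ y₀) :
    ∀ (L : List X), L.Nodup → ∀ (S : Finset Y), y₀ ∉ S →
    ((∀ x, bestGo r L (insert y₀ S) x = bestGo r L S x) ∧
      ∀ x ∈ L, bestGo r L S x = none → ¬ r y₀ x)
    ∨ ∃ x₀ ∈ L, r y₀ x₀ ∧ bestGo r L S x₀ = none ∧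
        bestGo r L (insert y₀ S) x₀ = some y₀ ∧
        ∀ x, x ≠ x₀ → bestGo r L (insert y₀ S) x = bestGo r L S x
  | [], _, S, _ => by simp [bestGo]
  | a :: L, hnd, S, hS => by
    have haL : a ∉ L := (List.nodup_cons.mp hnd).1
    have hndL : L.Nodup := (List.nodup_cons.mp hnd).2
    by_cases h : (S.filter (fun y => r y a)).Nonempty
    · -- unprimed filter nonempty; both choose the same minimum m
      set m := (S.filter (fun y => r y a)).min' h with hm
      have hmS : m ∈ S ∧ r m a := by
        simpa using Finset.mem_filter.mp (Finset.min'_mem _ h)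
      have hmne : m ≠ y₀ := fun e => hS (e ▸ hmS.1)
      have hfilt : (insert y₀ S).filter (fun y => r y a)
          = if r y₀ a then insert y₀ (S.filter (fun y => r y a))
            else S.filter (fun y => r y a) := by
        split_ifs with hr <;> [rw [Finset.filter_insert, if_pos hr];
          rw [Finset.filter_insert, if_neg hr]]
      have h' : ((insert y₀ S).filter (fun y => r y a)).Nonempty := by
        rw [hfilt]; split_ifs
        · exact (Finset.insert_nonempty _ _)
        · exact h
      have hmin' : ((insert y₀ S).filter (fun y => r y a)).min' h' = m := by
        rcases eq_or_ne ((insert y₀ S).filter (fun y => r y a))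
            (insert y₀ (S.filter (fun y => r y a))) with he | he
        · have := Finset.min'_insert y₀ _ h
          rw [show ((insert y₀ S).filter (fun y => r y a)).min' h'
              = ((insert y₀ (S.filter (fun y => r y a))).min' (Finset.insert_nonempty _ _)) by
                congr 1]
          · rw [this, ← hm, min_eq_right (hy₀ m)]
        · have he2 : (insert y₀ S).filter (fun y => r y a) = S.filter (fun y => r y a) := by
            rw [hfilt] at he ⊢; split_ifs at he ⊢ with hr
            · exact absurd rfl he
            · rfl
          rw [show ((insert y₀ S).filter (fun y => r y a)).min' h'
              = (S.filter (fun y => r y a)).min' h by congr 1]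
      have herase : (insert y₀ S).erase m = insert y₀ (S.erase m) :=
        Finset.erase_insert_of_ne hmne.symm  -- check name/direction
      have hS' : y₀ ∉ S.erase m := fun hc => hS (Finset.mem_of_mem_erase hc)
      have key := bestGo_insert_top r y₀ hy₀ L hndL (S.erase m) hS'
      have unfoldP : ∀ x, bestGo r (a :: L) (insert y₀ S) x
          = if x = a then some m else bestGo r L (insert y₀ (S.erase m)) x := by
        intro x
        rw [bestGo, dif_pos h', hmin', herase]
      have unfoldU : ∀ x, bestGo r (a :: L) S x
          = if x = a then some m else bestGo r L (S.erase m) x := by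
        intro x
        rw [bestGo, dif_pos h, ← hm]
      rcases key with ⟨heq, hnone⟩ | ⟨x₀, hx₀L, hr₀, hu₀, hp₀, heq⟩
      · left
        refine ⟨fun x => ?_, fun x hx hn => ?_⟩
        · rw [unfoldP, unfoldU]; split_ifs with hxa
          · rfl
          · exact heq x
        · rw [unfoldU] at hn
          rcases eq_or_ne x a with rfl | hxa
          · simp at hn
          · rw [if_neg hxa] at hn
            exact hnone x ((List.mem_cons.mp hx).resolve_left hxa) hn
      · right
        have hx₀a : x₀ ≠ a := fun e => haL (e ▸ hx₀L)
        refine ⟨x₀, List.mem_cons_of_mem _ hx₀L, hr₀, ?_, ?_, fun x hx => ?_⟩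
        · rw [unfoldU, if_neg hx₀a]; exact hu₀
        · rw [unfoldP, if_neg hx₀a]; exact hp₀
        · rw [unfoldP, unfoldU]; split_ifs with hxa
          · rfl
          · exact heq x hx
    · -- unprimed filter empty at a
      by_cases hr : r y₀ a
      · -- primed picks y₀ here
        right
        have hfe : S.filter (fun y => r y a) = ∅ := Finset.not_nonempty_iff_eq_empty.mp h
        have hfilt : (insert y₀ S).filter (fun y => r y a) = {y₀} := by
          rw [Finset.filter_insert, if_pos hr, hfe]; rfl
        have h' : ((insert y₀ S).filter (fun y => r y a)).Nonempty := by
          rw [hfilt]; exact ⟨y₀, Finset.mem_singleton_self y₀⟩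
        have hmin' : ((insert y₀ S).filter (fun y => r y a)).min' h' = y₀ :=
          le_antisymm (hy₀ _) (Finset.le_min' _ _ _ (fun z hz => by
            rw [hfilt] at hz; exact le_of_eq (Finset.mem_singleton.mp hz).symm))
        have herase : (insert y₀ S).erase y₀ = S := Finset.erase_insert hS
        have unfoldP : ∀ x, bestGo r (a :: L) (insert y₀ S) x
            = if x = a then some y₀ else bestGo r L S x := by
          intro x; rw [bestGo, dif_pos h', hmin', herase]
        have unfoldU : ∀ x, bestGo r (a :: L) S x
            = if x = a then none else bestGo r L S x := by
          intro x; rw [bestGo, dif_neg h]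
        refine ⟨a, List.mem_cons_self, hr, ?_, ?_, fun x hx => ?_⟩
        · rw [unfoldU, if_pos rfl]
        · rw [unfoldP, if_pos rfl]
        · rw [unfoldP, unfoldU, if_neg hx, if_neg hx]
      · -- neither run matches a
        have hfilt : (insert y₀ S).filter (fun y => r y a) = S.filter (fun y => r y a) := by
          rw [Finset.filter_insert, if_neg hr]
        have h' : ¬ ((insert y₀ S).filter (fun y => r y a)).Nonempty := by rw [hfilt]; exact h
        have unfoldP : ∀ x, bestGo r (a :: L) (insert y₀ S) x
            = if x = a then none else bestGo r L (insert y₀ S) x := by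
          intro x; rw [bestGo, dif_neg h']
        have unfoldU : ∀ x, bestGo r (a :: L) S x
            = if x = a then none else bestGo r L S x := by
          intro x; rw [bestGo, dif_neg h]
        rcases bestGo_insert_top r y₀ hy₀ L hndL S hS with ⟨heq, hnone⟩ | ⟨x₀, hx₀L, hr₀, hu₀, hp₀, heq⟩
        · left
          refine ⟨fun x => ?_, fun x hx hn => ?_⟩
          · rw [unfoldP, unfoldU]; split_ifs with hxa
            · rfl
            · exact heq x
          · rcases eq_or_ne x a with rfl | hxa
            · exact hr
            · rw [unfoldU, if_neg hxa] at hn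
              exact hnone x ((List.mem_cons.mp hx).resolve_left hxa) hn
        · right
          have hx₀a : x₀ ≠ a := fun e => haL (e ▸ hx₀L)
          refine ⟨x₀, List.mem_cons_of_mem _ hx₀L, hr₀, ?_, ?_, fun x hx => ?_⟩
          · rw [unfoldU, if_neg hx₀a]; exact hu₀
          · rw [unfoldP, if_neg hx₀a]; exact hp₀
          · rw [unfoldP, unfoldU]; split_ifs with hxa
            · rfl
            · exact heq x hx

/-- Removing the top element `y₀` of `Y'` (where any `y ↝ x` with `y ≠ y₀` forces
`y₀ ↝ x`): comparing the best matching `f` between `X` and `Y = Y' \ {y₀}` with the best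
matching `f'` between `X` and `Y'`, the sizes `a, a'` of the complements of their ranges
satisfy `a ≤ a' ≤ a + 1`; and `a' = a + 1` iff the domain of `f` is `{x : y₀ ↝ x}`,
in which case `C' = C ∪ {y₀}` and `f' = f`. -/
theorem best_matching_drop_top {X Y : Type*} [LinearOrder X] [LinearOrder Y]
    [Fintype X] [Fintype Y]
    (r : Y → X → Prop) [∀ y x, Decidable (r y x)] (htrav : TraversableRel r)
    (y₀ : Y) (hy₀ : ∀ y : Y, y ≤ y₀)
    (hmono : ∀ (x : X) (y : Y), y ≠ y₀ → r y x → r y₀ x) :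
    let f := bestMatchOn r Finset.univ (Finset.univ.erase y₀)
    let f' := bestMatchOn r Finset.univ Finset.univ
    let C := (Finset.univ.erase y₀).filter (fun y => ∀ x, f x ≠ some y)
    let C' := Finset.univ.filter (fun y => ∀ x, f' x ≠ some y)
    C.card ≤ C'.card ∧ C'.card ≤ C.card + 1 ∧
      (C'.card = C.card + 1 ↔ matchDom f = Finset.univ.filter (fun x => r y₀ x)) ∧
      (C'.card = C.card + 1 → C' = insert y₀ C ∧ f' = f) := by
  intro f f' C C'
  classical
  set L : List X := ((Finset.univ : Finset X).sort (· ≤ ·)).reverse with hL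
  have hnd : L.Nodup := by rw [hL]; exact List.nodup_reverse.mpr (Finset.sort_nodup _ _)
  have hmemL : ∀ x : X, x ∈ L := fun x => by
    rw [hL]; simp [Finset.mem_sort]
  have hSy : y₀ ∉ Finset.univ.erase y₀ := Finset.notMem_erase _ _
  have hins : insert y₀ ((Finset.univ : Finset Y).erase y₀) = (Finset.univ : Finset Y) :=
    Finset.insert_erase (Finset.mem_univ y₀)
  have hfdef : f = bestGo r L (Finset.univ.erase y₀) := by
    show bestMatchOn r Finset.univ (Finset.univ.erase y₀) = _
    rw [hL]; rfl
  have hfdef' : f' = bestGo r L (Finset.univ : Finset Y) := by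
    show bestMatchOn r Finset.univ Finset.univ = _
    rw [hL]; rfl
  have hCdef : C = (Finset.univ.erase y₀).filter (fun y => ∀ x, f x ≠ some y) := rfl
  have hCdef' : C' = Finset.univ.filter (fun y => ∀ x, f' x ≠ some y) := rfl
  have hfy₀ : ∀ x, f x ≠ some y₀ := fun x hx =>
    hSy ((bestGo_mem r L _ x y₀ (hfdef ▸ hx)).1)
  rcases bestGo_insert_top r y₀ hy₀ L hnd _ hSy with ⟨heq, hnone⟩ |
      ⟨x₀, _, hr₀, hu₀, hp₀, heq⟩
  · -- y₀ is never used: f' = f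
    rw [hins] at heq
    have hff : f' = f := by
      rw [hfdef, hfdef']; exact funext heq
    have hC' : C' = insert y₀ C := by
      rw [hCdef', hCdef, hff]
      ext y
      simp only [Finset.mem_filter, Finset.mem_univ, true_and, Finset.mem_insert,
        Finset.mem_erase]
      constructor
      · intro hy
        rcases eq_or_ne y y₀ with rfl | hne
        · exact Or.inl rfl
        · exact Or.inr ⟨⟨hne, trivial⟩, hy⟩
      · rintro (rfl | ⟨⟨hne, -⟩, hy⟩)
        · exact hfy₀
        · exact hy
    have hy₀C : y₀ ∉ C := fun hc => hSy (Finset.mem_filter.mp (hCdef ▸ hc)).1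
    have hcard : C'.card = C.card + 1 := by
      rw [hC', Finset.card_insert_of_notMem hy₀C]
    have hdom : matchDom f = Finset.univ.filter (fun x => r y₀ x) := by
      ext x
      simp only [matchDom, Finset.mem_filter, Finset.mem_univ, true_and]
      constructor
      · intro hx
        rcases Option.isSome_iff_exists.mp hx with ⟨y, hy⟩
        have hmem := bestGo_mem r L _ x y (hfdef ▸ hy)
        exact hmono x y (Finset.ne_of_mem_erase hmem.1) hmem.2
      · intro hr
        by_contra hx
        rw [Option.not_isSome_iff_eq_none] at hx
        exact hnone x (hmemL x) (hfdef ▸ hx) hr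
    exact ⟨by omega, by omega, ⟨fun _ => hdom, fun _ => hcard⟩, fun _ => ⟨hC', hff⟩⟩
  · -- y₀ is used at x₀: f' agrees with f except f' x₀ = some y₀
    rw [hins] at hp₀ heq
    have hu₀' : f x₀ = none := by rw [hfdef]; exact hu₀
    have hp₀' : f' x₀ = some y₀ := by rw [hfdef']; exact hp₀
    have heq' : ∀ x, x ≠ x₀ → f' x = f x := fun x hx => by
      rw [hfdef, hfdef']; exact heq x hx
    have hC' : C' = C := by
      rw [hCdef', hCdef]
      ext y
      simp only [Finset.mem_filter, Finset.mem_univ, true_and, Finset.mem_erase]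
      constructor
      · intro hy
        have hne : y ≠ y₀ := fun e => hy x₀ (by rw [e]; exact hp₀')
        refine ⟨⟨hne, trivial⟩, fun x hx => ?_⟩
        rcases eq_or_ne x x₀ with rfl | hxx
        · rw [hu₀'] at hx; cases hx
        · exact hy x (by rw [heq' x hxx]; exact hx)
      · rintro ⟨⟨hne, -⟩, hy⟩
        intro x hx
        rcases eq_or_ne x x₀ with rfl | hxx
        · rw [hp₀'] at hx
          exact hne (Option.some_inj.mp hx).symm
        · exact hy x (by rw [← heq' x hxx]; exact hx)
    have hcard : C'.card = C.card := by rw [hC']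
    have hdomne : matchDom f ≠ Finset.univ.filter (fun x => r y₀ x) := by
      intro hd
      have hx₀mem : x₀ ∈ Finset.univ.filter (fun x => r y₀ x) :=
        Finset.mem_filter.mpr ⟨Finset.mem_univ _, hr₀⟩
      rw [← hd] at hx₀mem
      have := (Finset.mem_filter.mp hx₀mem).2
      rw [hu₀'] at this
      simp at this
    refine ⟨by omega, by omega, ⟨fun h => absurd h (by omega), fun h => absurd h hdomne⟩,
      fun h => absurd h (by omega)⟩
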